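/- If q ≥ n and C ⊆ F_q^n is a Reed-Solomon code (of any dimension k ≤ n), then α_i(C) = n - i + 1 for all 1 ≤ i ≤ n. In particular, α_i(F_q^n) = n - i + 1 for 1 ≤ i ≤ n when q ≥ n. -/

import Mathlib

/-!
Every `i`-dimensional code `D ⊆ 𝔽ⁿ` satisfies the Singleton bound `d(D) + i ≤ n + 1`: some
nonzero codeword vanishes on `i - 1` prescribed coordinates. Hence `α_i(C)` is attained by any
MDS code of dimension `i` that is comparable with `C`. The Reed–Solomon codes `RS(a, 1) ⊆ ⋯ ⊆
RS(a, n)` form a chain of MDS codes, one in each dimension, since a nonzero polynomial of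
degree `< i` has at most `i - 1` roots; every `RS(a, k)` and `𝔽ⁿ` itself is comparable with
each of them.
-/

open Module

/-- Hamming weight of a vector. -/
noncomputable def hwt {ι α : Type*} [Zero α] (x : ι → α) : ℕ := {i | x i ≠ 0}.ncard

/-- Minimum distance (minimum weight of a nonzero element) of a code `D`. -/
noncomputable def dminN {𝔽 V : Type*} [Field 𝔽] [AddCommGroup V] [Module 𝔽 V]
    (wt : V → ℕ) (D : Submodule 𝔽 V) : ℕ :=
  sInf (wt '' {v : V | v ∈ D ∧ v ≠ 0})

/-- The `i`-th code distance of a code `C`: for `i ≤ dim C` the largest minimum distance of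
an `i`-dimensional subcode of `C`, and for `i ≥ dim C` the largest minimum distance of an
`i`-dimensional supercode of `C` (both notions agree at `i = dim C`). -/
noncomputable def alphaN {𝔽 V : Type*} [Field 𝔽] [AddCommGroup V] [Module 𝔽 V]
    (wt : V → ℕ) (C : Submodule 𝔽 V) (i : ℕ) : ℕ :=
  if i ≤ finrank 𝔽 C then
    sSup (dminN wt '' {D : Submodule 𝔽 V | D ≤ C ∧ finrank 𝔽 D = i})
  else
    sSup (dminN wt '' {D : Submodule 𝔽 V | C ≤ D ∧ finrank 𝔽 D = i})

/-- The Reed–Solomon code of dimension `k` with (distinct) evaluation points `a`: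
the image of the space of polynomials of degree `< k` under evaluation. -/
noncomputable def RSCode {𝔽 : Type*} [Field 𝔽] {n : ℕ} (a : Fin n → 𝔽) (k : ℕ) :
    Submodule 𝔽 (Fin n → 𝔽) :=
  Submodule.map (LinearMap.pi fun i => Polynomial.leval (a i)) (Polynomial.degreeLT 𝔽 k)

open Polynomial

section HammingWeight

variable {ι α : Type*} [Fintype ι] [Zero α]

lemma hwt_add_ncard_setOf_eq_zero (v : ι → α) :
    hwt v + {j | v j = 0}.ncard = Fintype.card ι := by
  rw [← Nat.card_eq_fintype_card, ← Set.ncard_compl_add_ncard {j | v j = 0}]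
  rfl

lemma hwt_add_card_le_of_eq_zero {v : ι → α} {s : Finset ι} (hs : ∀ j ∈ s, v j = 0) :
    hwt v + s.card ≤ Fintype.card ι := by
  have hsub : s.card ≤ {j | v j = 0}.ncard := by
    rw [← Set.ncard_coe_finset]
    exact Set.ncard_le_ncard hs
  have := hwt_add_ncard_setOf_eq_zero v
  omega

end HammingWeight

section MinimumDistance

variable {𝔽 V : Type*} [Field 𝔽] [AddCommGroup V] [Module 𝔽 V] {wt : V → ℕ}

lemma dminN_bot : dminN wt (⊥ : Submodule 𝔽 V) = 0 := by
  simp [dminN]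

lemma dminN_le {D : Submodule 𝔽 V} {v : V} (hv : v ∈ D) (hv0 : v ≠ 0) : dminN wt D ≤ wt v :=
  Nat.sInf_le ⟨v, ⟨hv, hv0⟩, rfl⟩

lemma le_dminN {D : Submodule 𝔽 V} {m : ℕ} (hD : D ≠ ⊥) (h : ∀ v ∈ D, v ≠ 0 → m ≤ wt v) :
    m ≤ dminN wt D := by
  obtain ⟨v, hv, hv0⟩ := Submodule.exists_mem_ne_zero_of_ne_bot hD
  exact le_csInf ⟨_, v, ⟨hv, hv0⟩, rfl⟩ (by rintro _ ⟨w, ⟨hw, hw0⟩, rfl⟩; exact h w hw hw0)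

end MinimumDistance

section SingletonBound

variable {ι 𝔽 : Type*} [Fintype ι] [Field 𝔽]

lemma exists_mem_ne_zero_forall_eq_zero_of_card_lt_finrank (D : Submodule 𝔽 (ι → 𝔽))
    {s : Finset ι} (hs : s.card < finrank 𝔽 D) : ∃ v ∈ D, v ≠ 0 ∧ ∀ j ∈ s, v j = 0 := by
  let restrict : D →ₗ[𝔽] (s → 𝔽) := (LinearMap.funLeft 𝔽 𝔽 ((↑) : s → ι)).comp D.subtype
  have hker : LinearMap.ker restrict ≠ ⊥ := LinearMap.ker_ne_bot_of_finrank_lt (by simpa using hs)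
  obtain ⟨⟨v, hv⟩, hvker, hv0⟩ := Submodule.exists_mem_ne_zero_of_ne_bot hker
  refine ⟨v, hv, fun h => hv0 (by simp [h]), fun j hj => ?_⟩
  simpa [restrict] using congrFun hvker ⟨j, hj⟩

theorem dminN_add_finrank_le (D : Submodule 𝔽 (ι → 𝔽)) :
    dminN hwt D + finrank 𝔽 D ≤ Fintype.card ι + 1 := by
  rcases eq_or_ne D ⊥ with rfl | hD
  · simp [dminN_bot]
  have hpos : 1 ≤ finrank 𝔽 D := Submodule.one_le_finrank_iff.mpr hD
  have hdim : finrank 𝔽 D ≤ Fintype.card ι := by simpa using D.finrank_le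
  obtain ⟨s, -, hs⟩ := (Finset.univ : Finset ι).exists_subset_card_eq (n := finrank 𝔽 D - 1)
    (by simp only [Finset.card_univ]; omega)
  obtain ⟨v, hv, hv0, hvs⟩ := exists_mem_ne_zero_forall_eq_zero_of_card_lt_finrank D
    (s := s) (by omega)
  have := dminN_le (wt := hwt) hv hv0
  have := hwt_add_card_le_of_eq_zero hvs
  omega

def IsMDS (D : Submodule 𝔽 (ι → 𝔽)) : Prop :=
  dminN hwt D + finrank 𝔽 D = Fintype.card ι + 1

lemma sSup_dminN_image_eq_of_isMDS {S : Set (Submodule 𝔽 (ι → 𝔽))} {D : Submodule 𝔽 (ι → 𝔽)}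
    (hmds : IsMDS D) (hDS : D ∈ S) (hS : ∀ D' ∈ S, finrank 𝔽 D' = finrank 𝔽 D) :
    sSup (dminN hwt '' S) = dminN hwt D := by
  refine IsGreatest.csSup_eq ⟨⟨D, hDS, rfl⟩, ?_⟩
  rintro _ ⟨D', hD', rfl⟩
  have := dminN_add_finrank_le D'
  have := hS D' hD'
  unfold IsMDS at hmds
  omega

theorem alphaN_eq_dminN_of_isMDS {C D : Submodule 𝔽 (ι → 𝔽)} (hmds : IsMDS D)
    (hCD : D ≤ C ∨ C ≤ D) : alphaN hwt C (finrank 𝔽 D) = dminN hwt D := by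
  unfold alphaN
  split_ifs with h
  · have hDC : D ≤ C := hCD.elim id fun hCD =>
      (Submodule.eq_of_le_of_finrank_eq hCD ((Submodule.finrank_mono hCD).antisymm h)).ge
    exact sSup_dminN_image_eq_of_isMDS hmds ⟨hDC, rfl⟩ fun _ hD' => hD'.2
  · have hCD : C ≤ D := hCD.resolve_left fun hDC => h (Submodule.finrank_mono hDC)
    exact sSup_dminN_image_eq_of_isMDS hmds ⟨hCD, rfl⟩ fun _ hD' => hD'.2

end SingletonBound

section ReedSolomon

variable {𝔽 : Type*} [Field 𝔽]

lemma ncard_setOf_eval_eq_zero_le {ι : Type*} [Fintype ι] {a : ι → 𝔽}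
    (ha : Function.Injective a) {p : 𝔽[X]} (hp : p ≠ 0) :
    {j | p.eval (a j) = 0}.ncard ≤ p.natDegree := by
  classical
  by_contra! h
  refine hp (eq_zero_of_natDegree_lt_card_of_eval_eq_zero p
    (f := fun j : {j | p.eval (a j) = 0} => a j) (ha.comp Subtype.val_injective) (fun j => j.2) ?_)
  rwa [← Nat.card_eq_fintype_card, Nat.card_coe_set_eq]

variable {n : ℕ} {a : Fin n → 𝔽}

lemma mem_RSCode {k : ℕ} {v : Fin n → 𝔽} :
    v ∈ RSCode a k ↔ ∃ p ∈ degreeLT 𝔽 k, (fun j => p.eval (a j)) = v := by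
  simp [RSCode, funext_iff]

lemma RSCode_mono (a : Fin n → 𝔽) {i k : ℕ} (h : i ≤ k) : RSCode a i ≤ RSCode a k :=
  Submodule.map_mono (degreeLT_mono h)

lemma add_le_hwt_add_of_mem_RSCode (ha : Function.Injective a) {k : ℕ} {v : Fin n → 𝔽}
    (hv : v ∈ RSCode a k) (hv0 : v ≠ 0) : n + 1 ≤ hwt v + k := by
  obtain ⟨p, hp, rfl⟩ := mem_RSCode.mp hv
  have hp0 : p ≠ 0 := by rintro rfl; exact hv0 (by ext; simp)
  have hdeg : p.natDegree < k := (natDegree_lt_iff_degree_lt hp0).mpr (mem_degreeLT.mp hp)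
  have hwt_add := hwt_add_ncard_setOf_eq_zero fun j => p.eval (a j)
  have := ncard_setOf_eval_eq_zero_le ha hp0
  rw [Fintype.card_fin] at hwt_add
  omega

lemma finrank_RSCode (ha : Function.Injective a) {k : ℕ} (hk : k ≤ n) :
    finrank 𝔽 (RSCode a k) = k := by
  let ev : degreeLT 𝔽 k →ₗ[𝔽] (Fin n → 𝔽) :=
    (LinearMap.pi fun j => leval (a j)).comp (degreeLT 𝔽 k).subtype
  have hinj : Function.Injective ev := by
    rw [← LinearMap.ker_eq_bot, Submodule.eq_bot_iff]
    rintro ⟨p, hp⟩ hker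
    have hp0 : p = 0 := by
      by_contra hp0
      have hdeg : p.natDegree < Fintype.card (Fin n) := by
        rw [Fintype.card_fin]
        exact ((natDegree_lt_iff_degree_lt hp0).mpr (mem_degreeLT.mp hp)).trans_le hk
      exact hp0 (eq_zero_of_natDegree_lt_card_of_eval_eq_zero p ha
        (fun j => by simpa [ev] using congrFun hker j) hdeg)
    simp [hp0]
  have hrange : LinearMap.range ev = RSCode a k := by
    rw [LinearMap.range_comp, Submodule.range_subtype]
    rfl
  rw [← hrange, LinearMap.finrank_range_of_inj hinj, (degreeLTEquiv 𝔽 k).finrank_eq]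
  simp

lemma isMDS_RSCode (ha : Function.Injective a) {k : ℕ} (hk : 1 ≤ k) (hkn : k ≤ n) :
    IsMDS (RSCode a k) := by
  have hdim := finrank_RSCode ha hkn
  have hne : RSCode a k ≠ ⊥ := Submodule.one_le_finrank_iff.mp (by rwa [hdim])
  have hlow : n + 1 - k ≤ dminN hwt (RSCode a k) := le_dminN hne fun v hv hv0 => by
    have := add_le_hwt_add_of_mem_RSCode ha hv hv0
    omega
  have hsingleton := dminN_add_finrank_le (RSCode a k)
  unfold IsMDS
  rw [Fintype.card_fin, hdim] at hsingleton ⊢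
  omega

theorem alphaN_eq_of_forall_comparable_RSCode (ha : Function.Injective a)
    {C : Submodule 𝔽 (Fin n → 𝔽)} (hC : ∀ i, RSCode a i ≤ C ∨ C ≤ RSCode a i) {i : ℕ}
    (hi : 1 ≤ i) (hin : i ≤ n) : alphaN hwt C i = n - i + 1 := by
  have hmds := isMDS_RSCode ha hi hin
  conv_lhs => rw [← finrank_RSCode ha hin]
  rw [alphaN_eq_dminN_of_isMDS hmds (hC i)]
  unfold IsMDS at hmds
  simp only [Fintype.card_fin, finrank_RSCode ha hin] at hmds
  omega

end ReedSolomon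

theorem alpha_RSCode_general {𝔽 : Type*} [Field 𝔽] {n k : ℕ}
    (a : Fin n → 𝔽) (ha : Function.Injective a) :
    (∀ i, 1 ≤ i → i ≤ n → alphaN hwt (RSCode a k) i = n - i + 1) ∧
    (∀ i, 1 ≤ i → i ≤ n → alphaN hwt (⊤ : Submodule 𝔽 (Fin n → 𝔽)) i = n - i + 1) :=
  ⟨fun _ => alphaN_eq_of_forall_comparable_RSCode ha fun i =>
      (le_total i k).imp (RSCode_mono a) (RSCode_mono a),
    fun _ => alphaN_eq_of_forall_comparable_RSCode ha fun _ => Or.inl le_top⟩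

/-- If `q ≥ n` and `C ⊆ 𝔽_q^n` is a Reed–Solomon code (of any dimension `k ≤ n`), then
`α_i(C) = n - i + 1` for all `1 ≤ i ≤ n`; in particular `α_i(𝔽_q^n) = n - i + 1`. -/
theorem alpha_RSCode {𝔽 : Type*} [Field 𝔽] [Fintype 𝔽] {n k : ℕ}
    (hq : n ≤ Fintype.card 𝔽) (a : Fin n → 𝔽) (ha : Function.Injective a) (hk : k ≤ n) :
    (∀ i, 1 ≤ i → i ≤ n → alphaN hwt (RSCode a k) i = n - i + 1) ∧
    (∀ i, 1 ≤ i → i ≤ n → alphaN hwt (⊤ : Submodule 𝔽 (Fin n → 𝔽)) i = n - i + 1) :=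
  alpha_RSCode_general a ha
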